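/- Let θ₀ = 1 and suppose the positive sequence {θ_k} satisfies θ_{k+1} − θ_k ≤ −√θ_k θ_{k+1}/√(Q θ_k + R²) with Q > 0, R ≥ 0, and θ_{k+1}/θ_k ≥ δ > 0 for all k. Then θ_k ≤ exp(−δk/(2√Q)) + (4R/(4R + δk))² for all k ≥ 0. -/

import Mathlib

/-!
Put `y = √θ_k` and `D = √Q y + R ≥ √(Qθ_k + R²)`. The recursion gives the contraction
`θ_{k+1} (D + y) ≤ θ_k D`, and with `θ_{k+1} ≥ δ θ_k` this yields
`δ ≤ D/(D + y) ≤ √Q y/(D + y) + 4R/(4D + y)`. The first summand is at most the decrease of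
`log θ`, the second at most `2R` times the increase of `θ^{-1/2}`; so the potential
`-√Q log θ + 2R (θ^{-1/2} - 1)`, which vanishes at `θ₀ = 1`, grows by at least `δ` per step.
Once it exceeds `δk`, one of its two terms exceeds `δk/2`, giving the exponential or the
`(4R/(4R + δk))²` bound.
-/

open Real

namespace ThetaEstimate

lemma sqrt_mul_add_sq_le {Q R x : ℝ} (hQ : 0 ≤ Q) (hR : 0 ≤ R) (hx : 0 ≤ x) :
    √(Q * x + R ^ 2) ≤ √Q * √x + R := by
  rw [sqrt_le_left (by positivity)]
  nlinarith [sq_sqrt hQ, sq_sqrt hx, mul_nonneg (mul_nonneg (sqrt_nonneg Q) (sqrt_nonneg x)) hR]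

lemma mul_add_sqrt_le_of_sub_le {a b S D : ℝ} (hb : 0 ≤ b) (hS : 0 < S) (hSD : S ≤ D)
    (h : b - a ≤ -(√a * b) / S) : b * (D + √a) ≤ a * D := by
  have hdec : √a * b ≤ (a - b) * S := by
    rw [neg_div, le_neg, neg_sub] at h
    exact (div_le_iff₀ hS).mp h
  have hab : 0 ≤ a - b := nonneg_of_mul_nonneg_left
    (le_trans (mul_nonneg (sqrt_nonneg a) hb) hdec) hS
  nlinarith [mul_le_mul_of_nonneg_left hSD hab]

lemma div_add_le_log_sub_log {a b y D : ℝ} (ha : 0 < a) (hb : 0 < b) (hy : 0 < y) (hD : 0 ≤ D)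
    (h : b * (D + y) ≤ a * D) : y / (D + y) ≤ log a - log b := by
  have hDy : 0 < D + y := by linarith
  calc y / (D + y) = 1 - D / (D + y) := by field_simp; ring
    _ ≤ 1 - (a / b)⁻¹ := by
      rw [inv_div]
      gcongr 1 - ?_
      rw [div_le_div_iff₀ ha hDy]
      linarith
    _ ≤ log (a / b) := one_sub_inv_le_log_of_pos (div_pos ha hb)
    _ = log a - log b := log_div ha.ne' hb.ne'

lemma two_div_le_inv_sub_inv {y z D : ℝ} (hy : 0 < y) (hz : 0 < z) (hD : 0 ≤ D)
    (h : z ^ 2 * (D + y) ≤ y ^ 2 * D) : 2 / (4 * D + y) ≤ z⁻¹ - y⁻¹ := by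
  have h4Dy : 0 < 4 * D + y := by linarith
  -- `(D + y)(4D + y)² - D(4D + 3y)² = y³`
  have hsq : (z * (4 * D + 3 * y)) ^ 2 ≤ (y * (4 * D + y)) ^ 2 := by
    nlinarith [mul_le_mul_of_nonneg_right h (sq_nonneg (4 * D + 3 * y)), pow_pos hy 3,
      mul_nonneg (pow_pos hy 2).le (pow_pos hy 3).le]
  have hz' : z * (4 * D + 3 * y) ≤ y * (4 * D + y) :=
    (pow_le_pow_iff_left₀ (by positivity) (by positivity) two_ne_zero).mp hsq
  calc 2 / (4 * D + y) = (4 * D + 3 * y) / (y * (4 * D + y)) - y⁻¹ := by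
        field_simp
        ring
    _ ≤ z⁻¹ - y⁻¹ := by
      gcongr
      rw [div_le_iff₀ (by positivity), inv_mul_eq_div, le_div_iff₀ hz]
      linarith

noncomputable def potential (Q R θ : ℝ) : ℝ :=
  -(√Q * log θ) + 2 * R * ((√θ)⁻¹ - 1)

lemma potential_one (Q R : ℝ) : potential Q R 1 = 0 := by
  simp [potential]

lemma potential_add_le {Q R δ a b : ℝ} (hR : 0 ≤ R) (ha : 0 < a) (hb : 0 < b)
    (hδ : δ * a ≤ b) (h : b * (√Q * √a + R + √a) ≤ a * (√Q * √a + R)) :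
    potential Q R a + δ ≤ potential Q R b := by
  set y := √a with hy_def
  set D := √Q * y + R
  have hy : 0 < y := sqrt_pos.mpr ha
  have hD : 0 ≤ D := by positivity
  have hδD : δ ≤ D / (D + y) := by
    rw [le_div_iff₀ (by linarith)]
    nlinarith
  have hsplit : D / (D + y) ≤ √Q * (y / (D + y)) + 2 * R * (2 / (4 * D + y)) := by
    rw [mul_div_assoc', mul_div_assoc', div_add_div _ _ (by linarith) (by linarith),
      div_le_div_iff₀ (by linarith) (by positivity)]
    nlinarith [mul_nonneg hR hy.le, mul_nonneg (mul_nonneg hR hy.le) hD]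
  have hlog := mul_le_mul_of_nonneg_left
    (div_add_le_log_sub_log ha hb hy hD h) (sqrt_nonneg Q)
  have hinv := mul_le_mul_of_nonneg_left (two_div_le_inv_sub_inv hy (sqrt_pos.mpr hb) hD
    (by rwa [sq_sqrt hb.le, hy_def, sq_sqrt ha.le])) (by positivity : 0 ≤ 2 * R)
  unfold potential
  linarith

lemma le_exp_add_sq_of_le_potential {Q R θ s : ℝ} (hQ : 0 < Q) (hR : 0 ≤ R) (hθ : 0 < θ)
    (hs : 0 ≤ s) (h : s ≤ potential Q R θ) :
    θ ≤ exp (-s / (2 * √Q)) + (4 * R / (4 * R + s)) ^ 2 := by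
  have hsQ : 0 < √Q := sqrt_pos.mpr hQ
  have hy : 0 < √θ := sqrt_pos.mpr hθ
  unfold potential at h
  by_cases hlog : s / 2 ≤ -(√Q * log θ)
  · have : θ ≤ exp (-s / (2 * √Q)) := by
      rw [← log_le_iff_le_exp hθ, le_div_iff₀ (by positivity)]
      linarith
    linarith [sq_nonneg (4 * R / (4 * R + s))]
  · have hpow : s < 4 * R * ((√θ)⁻¹ - 1) := by linarith
    have hden : 0 < 4 * R + s := by
      by_contra! h0
      rw [show R = 0 by linarith, mul_zero, zero_mul] at hpow
      linarith
    have hsqrt : √θ ≤ 4 * R / (4 * R + s) := by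
      rw [le_div_iff₀ hden]
      have := mul_lt_mul_of_pos_right hpow hy
      rw [mul_sub, sub_mul, inv_mul_cancel_right₀ hy.ne'] at this
      linarith
    calc θ = √θ ^ 2 := (sq_sqrt hθ.le).symm
      _ ≤ (4 * R / (4 * R + s)) ^ 2 := pow_le_pow_left₀ hy.le hsqrt 2
      _ ≤ _ := le_add_of_nonneg_left (exp_pos _).le

end ThetaEstimate

open ThetaEstimate in
theorem theta_estimate_nu_half (θ : ℕ → ℝ) (Q R δ : ℝ)
    (hQ : 0 < Q) (hR : 0 ≤ R) (hδ : 0 < δ)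
    (hpos : ∀ k, 0 < θ k) (hθ0 : θ 0 = 1)
    (hratio : ∀ k, θ (k+1) / θ k ≥ δ)
    (hrec : ∀ k, θ (k+1) - θ k ≤
      -(Real.sqrt (θ k) * θ (k+1)) / Real.sqrt (Q * θ k + R^2)) :
    ∀ k : ℕ, θ k ≤
      Real.exp (-(δ * k) / (2 * Real.sqrt Q)) + (4 * R / (4 * R + δ * k))^2 := by
  have hgrowth : ∀ k : ℕ, δ * k ≤ potential Q R (θ k) := by
    intro k
    induction k with
    | zero => simp [hθ0, potential_one]
    | succ k ih =>
      have hcontract := mul_add_sqrt_le_of_sub_le (hpos (k + 1)).le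
        (sqrt_pos.mpr (by nlinarith [hpos k])) (sqrt_mul_add_sq_le hQ.le hR (hpos k).le) (hrec k)
      have hstep := potential_add_le hR (hpos k) (hpos (k + 1))
        ((le_div_iff₀ (hpos k)).mp (hratio k)) hcontract
      push_cast
      linarith
  exact fun k => le_exp_add_sq_of_le_potential hQ hR (hpos k) (by positivity) (hgrowth k)
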